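/- arXiv:0909.5004 — 4 statements merged into one kernel-verified Lean document; each statement's English description precedes it below -/
import Mathlib

section
/- For a separable metric space X the following are equivalent: (1) X is a union of countably many compact finite-dimensional subsets and X is not itself both compact and finite-dimensional; (2) 1 < tp_{S₁(𝓞_kfd,𝓞)}(X) ≤ ω, i.e., TWO has a winning strategy in the ω-length game G₁^ω(𝓞_kfd,𝓞) on X but not in the 1-inning game G₁^1(𝓞_kfd,𝓞) on X. -/
open Set Topology

/-- The Lebesgue covering dimension of `X` is at most `n`: every finite open cover has an
open refinement, still covering `X`, in which every point lies in at most `n+1` members. -/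
def CovDimLE (X : Type*) [TopologicalSpace X] (n : ℕ) : Prop :=
  ∀ 𝓤 : Set (Set X), 𝓤.Finite → (∀ U ∈ 𝓤, IsOpen U) → ⋃₀ 𝓤 = Set.univ →
    ∃ 𝓥 : Set (Set X), (∀ V ∈ 𝓥, IsOpen V) ∧ ⋃₀ 𝓥 = Set.univ ∧
      (∀ V ∈ 𝓥, ∃ U ∈ 𝓤, V ⊆ U) ∧
      ∀ x : X, {V | V ∈ 𝓥 ∧ x ∈ V}.Finite ∧ {V | V ∈ 𝓥 ∧ x ∈ V}.ncard ≤ n + 1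

/-- `X` is finite dimensional. -/
def FinDim (X : Type*) [TopologicalSpace X] : Prop :=
  ∃ n : ℕ, CovDimLE X n

/-- The compact finite-dimensional subsets of `X` (as subspaces). -/
def kfdSets (X : Type*) [TopologicalSpace X] : Set (Set X) :=
  {T : Set X | IsCompact T ∧ FinDim T}

/-- The finite-dimensional subsets of `X` (as subspaces). -/
def fdSets (X : Type*) [TopologicalSpace X] : Set (Set X) :=
  {T : Set X | FinDim T}

/-- `X` is countable dimensional: a union of countably many zero-dimensional subsets. -/
def CountableDimensional (X : Type*) [TopologicalSpace X] : Prop :=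
  ∃ Z : ℕ → Set X, (∀ n, CovDimLE (Z n) 0) ∧ (⋃ n, Z n) = Set.univ

/-- `𝓤` is an open `𝓣`-cover of `X`. -/
def IsTCover {X : Type*} [TopologicalSpace X] (𝓣 𝓤 : Set (Set X)) : Prop :=
  (∀ U ∈ 𝓤, IsOpen U) ∧ (∀ x : X, ∃ U ∈ 𝓤, x ∈ U) ∧ ∀ T ∈ 𝓣, ∃ U ∈ 𝓤, T ⊆ U

/-- `𝓤` is an open cover of `X`. -/
def IsOpenCover {X : Type*} [TopologicalSpace X] (𝓤 : Set (Set X)) : Prop :=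
  (∀ U ∈ 𝓤, IsOpen U) ∧ ∀ x : X, ∃ U ∈ 𝓤, x ∈ U

/-- A strategy for TWO in the length-`α` game `G₁`: to each inning `γ < α` and each
history `(O_β : β ≤ γ)` of moves of ONE it assigns a response (a subset of `X`). -/
def TwoStrategy (X : Type*) (α : Ordinal.{0}) :=
  ∀ γ : Ordinal.{0}, γ < α → ((β : Ordinal.{0}) → β ≤ γ → Set (Set X)) → Set X

/-- The strategy `F` for TWO is winning in `G₁^α(𝓞(𝓣),𝓞)`: responses to legal histories are
elements of ONE's last move, and for every play of `𝓣`-covers by ONE the responses cover `X`. -/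
def IsWinningTwo {X : Type*} [TopologicalSpace X] (𝓣 : Set (Set X)) (α : Ordinal.{0})
    (F : TwoStrategy X α) : Prop :=
  (∀ (γ : Ordinal.{0}) (hγ : γ < α) (O : (β : Ordinal.{0}) → β ≤ γ → Set (Set X)),
      (∀ β hβ, IsTCover 𝓣 (O β hβ)) → F γ hγ O ∈ O γ le_rfl) ∧
  ∀ O : (γ : Ordinal.{0}) → γ < α → Set (Set X),
    (∀ γ hγ, IsTCover 𝓣 (O γ hγ)) →
    ∀ x : X, ∃ (γ : Ordinal.{0}) (hγ : γ < α),
      x ∈ F γ hγ (fun β hβ => O β (lt_of_le_of_lt hβ hγ))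

/-- TWO has a winning strategy in `G₁^α(𝓞(𝓣),𝓞)` on `X`. -/
def TwoWins (X : Type*) [TopologicalSpace X] (𝓣 : Set (Set X)) (α : Ordinal.{0}) : Prop :=
  ∃ F : TwoStrategy X α, IsWinningTwo 𝓣 α F

/-- `tp_{S₁(𝓞(𝓣),𝓞)}(X) = α`: TWO wins the length-`α` game but no shorter one. -/
def TPEq (X : Type*) [TopologicalSpace X] (𝓣 : Set (Set X)) (α : Ordinal.{0}) : Prop :=
  TwoWins X 𝓣 α ∧ ∀ β < α, ¬ TwoWins X 𝓣 β

/-- `tp_{S₁(𝓞(𝓣),𝓞)}(X) ≤ α`. -/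
def TPLe (X : Type*) [TopologicalSpace X] (𝓣 : Set (Set X)) (α : Ordinal.{0}) : Prop :=
  ∃ β ≤ α, TwoWins X 𝓣 β

/-- A strategy for TWO in the length-`α` game `G_c`. -/
def TwoStrategyC (X : Type*) (α : Ordinal.{0}) :=
  ∀ γ : Ordinal.{0}, γ < α → ((β : Ordinal.{0}) → β ≤ γ → Set (Set X)) → Set (Set X)

/-- The strategy `F` for TWO is winning in `G_c^α(𝓞,𝓞)`: to legal histories it responds with
pairwise disjoint families of open sets refining ONE's last move, and for every play of open
covers by ONE the union of the responses covers `X`. -/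
def IsWinningTwoC {X : Type*} [TopologicalSpace X] (α : Ordinal.{0})
    (F : TwoStrategyC X α) : Prop :=
  (∀ (γ : Ordinal.{0}) (hγ : γ < α) (O : (β : Ordinal.{0}) → β ≤ γ → Set (Set X)),
      (∀ β hβ, IsOpenCover (O β hβ)) →
        (∀ V ∈ F γ hγ O, IsOpen V) ∧ (F γ hγ O).Pairwise Disjoint ∧
          ∀ V ∈ F γ hγ O, ∃ U ∈ O γ le_rfl, V ⊆ U) ∧
  ∀ O : (γ : Ordinal.{0}) → γ < α → Set (Set X),
    (∀ γ hγ, IsOpenCover (O γ hγ)) →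
    ∀ x : X, ∃ (γ : Ordinal.{0}) (hγ : γ < α),
      ∃ V ∈ F γ hγ (fun β hβ => O β (lt_of_le_of_lt hβ hγ)), x ∈ V

/-- TWO has a winning strategy in `G_c^α(𝓞,𝓞)` on `X`. -/
def TwoWinsC (X : Type*) [TopologicalSpace X] (α : Ordinal.{0}) : Prop :=
  ∃ F : TwoStrategyC X α, IsWinningTwoC α F

/-- `tp_{S_c(𝓞,𝓞)}(X) = α`. -/
def TPCEq (X : Type*) [TopologicalSpace X] (α : Ordinal.{0}) : Prop :=
  TwoWinsC X α ∧ ∀ β < α, ¬ TwoWinsC X β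

/-- `tp_{S_c(𝓞,𝓞)}(X) ≤ α`. -/
def TPCLe (X : Type*) [TopologicalSpace X] (α : Ordinal.{0}) : Prop :=
  ∃ β ≤ α, TwoWinsC X β

/-!
If `X = ⋃ₙ Kₙ` with each `Kₙ` compact and finite-dimensional, TWO wins the ω-game by covering
`Kₙ` in inning `n`.

The key fact for the converse: in a T₁ space, a set `C` that lies in a member of every open
`𝓞_kfd`-cover lies in a compact finite-dimensional set, since otherwise (for `C` with two points)
`{X \ {z} : z ∈ C}` is an `𝓞_kfd`-cover without such a member. With `C = X` this says that TWO
wins in one inning exactly when `X` is compact and finite-dimensional.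

If TWO wins the ω-game, let ONE play only `𝓞_kfd`-covers by members of a countable family `B` of
open sets (finite unions of basic open sets), so that TWO's answers range over `B` and only
countably many positions arise by following them. At each such position, the intersection of
TWO's answers to all of ONE's moves is a set of the kind above, and these sets cover `X`: a point
outside all of them would be avoided by a play in which ONE always moves so as to miss it.
-/

open Function

section

variable {X : Type*}

section GameTree

variable {α β : Type*} (M : Set α) (σ : (ℕ → α) → ℕ → Set β) (a₀ : α)

noncomputable def extendPosition (h : ℕ → α) (k : ℕ) (W : Set β) : ℕ → α :=
  open Classical in
  update h k (if hU : ∃ U ∈ M, σ (update h k U) k = W then hU.choose else a₀)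

/-- A history of moves of ONE along which `σ` gives the answers `s`, most recent first. -/
noncomputable def positionOfAnswers {R : Set (Set β)} : List R → ℕ → α
  | [] => fun _ => a₀
  | W :: s => extendPosition M σ a₀ (positionOfAnswers s) s.length W

variable {M σ a₀} {R : Set (Set β)}

lemma positionOfAnswers_mem (ha₀ : a₀ ∈ M) (s : List R) (j : ℕ) :
    positionOfAnswers M σ a₀ s j ∈ M := by
  induction s generalizing j with
  | nil => exact ha₀
  | cons W s ih =>
    simp only [positionOfAnswers, extendPosition]
    rcases eq_or_ne j s.length with rfl | hj
    · rw [update_self]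
      split_ifs with hU
      exacts [hU.choose_spec.1, ha₀]
    · rw [update_of_ne hj]
      exact ih j

lemma positionOfAnswers_cons_of_ne {W : R} {s : List R} {j : ℕ} (hj : j ≠ s.length) :
    positionOfAnswers M σ a₀ (W :: s) j = positionOfAnswers M σ a₀ s j := by
  simp only [positionOfAnswers, extendPosition, update_of_ne hj]

lemma answer_positionOfAnswers_cons {W : R} {s : List R}
    (hW : ∃ U ∈ M, σ (update (positionOfAnswers M σ a₀ s) s.length U) s.length = W) :
    σ (positionOfAnswers M σ a₀ (W :: s)) s.length = W := by
  simp only [positionOfAnswers, extendPosition, dif_pos hW]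
  exact hW.choose_spec.2

lemma exists_play_avoiding_of_forall_position (ha₀ : a₀ ∈ M)
    (hσ : ∀ O O' k, (∀ j ≤ k, O j = O' j) → σ O k = σ O' k)
    (hσR : ∀ O, (∀ j, O j ∈ M) → ∀ k, σ O k ∈ R) {x : β}
    (hx : ∀ s : List R, ∃ U ∈ M,
      x ∉ σ (update (positionOfAnswers M σ a₀ s) s.length U) s.length) :
    ∃ O : ℕ → α, (∀ j, O j ∈ M) ∧ ∀ k, x ∉ σ O k := by
  let pos := positionOfAnswers M σ a₀ (R := R)
  choose U hUM hxU using hx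
  have hupd (s : List R) : ∀ j, update (pos s) s.length (U s) j ∈ M :=
    (forall_update_iff _ fun _ V => V ∈ M).mpr ⟨hUM s, fun j _ => positionOfAnswers_mem ha₀ s j⟩
  let next (s : List R) : R := ⟨_, hσR _ (hupd s) s.length⟩
  let play (k : ℕ) : List R := Nat.rec [] (fun _ s => next s :: s) k
  have hlen (k : ℕ) : (play k).length = k := by
    induction k with
    | zero => rfl
    | succ k ih => exact congrArg Nat.succ ih
  let O (j : ℕ) : α := pos (play (j + 1)) j
  have hO (k : ℕ) : ∀ j < k, pos (play k) j = O j := by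
    induction k with
    | zero => exact fun j hj => absurd hj j.not_lt_zero
    | succ k ih =>
      intro j hj
      rcases (Nat.lt_succ_iff.mp hj).lt_or_eq with hjk | rfl
      · rw [← ih j hjk]
        exact positionOfAnswers_cons_of_ne (by rw [hlen]; exact hjk.ne)
      · rfl
  refine ⟨O, fun j => positionOfAnswers_mem ha₀ _ j, fun k hk => ?_⟩
  have hanswer : σ (pos (play (k + 1))) k = next (play k) := by
    have := answer_positionOfAnswers_cons (M := M) (σ := σ) (a₀ := a₀) (W := next (play k))
      ⟨U (play k), hUM _, rfl⟩
    rwa [hlen] at this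
  rw [← hσ _ _ k fun j hj => hO (k + 1) j (Nat.lt_succ_of_le hj), hanswer] at hk
  exact hxU _ hk

/-- Abstract form of the game: ONE plays members of `M`, TWO answers by `σ` with sets drawn
from the countable family `R`, and `σ` wins when its answers cover `β`. -/
theorem exists_positions_forcing_of_winning (hM : M.Nonempty) (hR : R.Countable)
    (hσ : ∀ O O' k, (∀ j ≤ k, O j = O' j) → σ O k = σ O' k)
    (hσR : ∀ O, (∀ j, O j ∈ M) → ∀ k, σ O k ∈ R)
    (hwin : ∀ O, (∀ j, O j ∈ M) → ∀ x, ∃ k, x ∈ σ O k) :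
    ∃ (h : ℕ → ℕ → α) (k : ℕ → ℕ), (∀ n j, h n j ∈ M) ∧
      ∀ x, ∃ n, ∀ U ∈ M, x ∈ σ (update (h n) (k n) U) (k n) := by
  obtain ⟨a₀, ha₀⟩ := hM
  have := hR.to_subtype
  obtain ⟨e, he⟩ := exists_surjective_nat (List R)
  refine ⟨fun n => positionOfAnswers M σ a₀ (e n), fun n => (e n).length,
    fun n j => positionOfAnswers_mem ha₀ _ j, fun x => ?_⟩
  by_contra! hx
  obtain ⟨O, hOM, hxO⟩ := exists_play_avoiding_of_forall_position ha₀ hσ hσR fun s => by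
    obtain ⟨n, rfl⟩ := he s
    exact hx n
  obtain ⟨k, hk⟩ := hwin O hOM x
  exact hxO k hk

end GameTree

/-- `β.card.toNat` reads an ordinal `β < ω` as a natural number. -/
noncomputable def TwoStrategy.onNat (F : TwoStrategy X Ordinal.omega0) (O : ℕ → Set (Set X))
    (k : ℕ) : Set X :=
  F k (Ordinal.natCast_lt_omega0 k) fun β _ => O β.card.toNat

namespace TwoStrategy

variable {F : TwoStrategy X Ordinal.omega0}

lemma onNat_congr {O O' : ℕ → Set (Set X)} {k : ℕ} (h : ∀ j ≤ k, O j = O' j) :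
    F.onNat O k = F.onNat O' k := by
  refine congrArg (F _ _) (funext fun β => funext fun hβ => ?_)
  obtain ⟨j, rfl⟩ := Ordinal.lt_omega0.mp (hβ.trans_lt (Ordinal.natCast_lt_omega0 k))
  rw [Ordinal.card_nat, Cardinal.toNat_natCast]
  exact h j (by exact_mod_cast hβ)

end TwoStrategy

variable [TopologicalSpace X]

lemma CovDimLE.of_homeomorph {Y : Type*} [TopologicalSpace Y] {n : ℕ} (h : CovDimLE X n)
    (e : X ≃ₜ Y) : CovDimLE Y n := by
  intro 𝓤 hfin hop hcov
  obtain ⟨𝓥, hVop, hVcov, hVref, hVpt⟩ :=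
    h ((e ⁻¹' ·) '' 𝓤) (hfin.image _)
      (by rintro _ ⟨U, hU, rfl⟩; exact (hop U hU).preimage e.continuous)
      (by rw [sUnion_image, ← preimage_iUnion₂, ← sUnion_eq_biUnion, hcov, preimage_univ])
  have hinj : Injective (e.symm ⁻¹' · : Set X → Set Y) :=
    preimage_injective.mpr e.symm.surjective
  refine ⟨(e.symm ⁻¹' ·) '' 𝓥, ?_, ?_, ?_, fun y => ?_⟩
  · rintro _ ⟨V, hV, rfl⟩
    exact (hVop V hV).preimage e.symm.continuous
  · rw [sUnion_image, ← preimage_iUnion₂, ← sUnion_eq_biUnion, hVcov, preimage_univ]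
  · rintro _ ⟨V, hV, rfl⟩
    obtain ⟨_, ⟨U, hU, rfl⟩, hVU⟩ := hVref V hV
    exact ⟨U, hU, fun y hy => by simpa using hVU hy⟩
  · have hpt : {W | W ∈ (e.symm ⁻¹' ·) '' 𝓥 ∧ y ∈ W} =
        (e.symm ⁻¹' ·) '' {V | V ∈ 𝓥 ∧ e.symm y ∈ V} := by
      ext W
      constructor
      · rintro ⟨⟨V, hV, rfl⟩, hy⟩
        exact ⟨V, ⟨hV, hy⟩, rfl⟩
      · rintro ⟨V, ⟨hV, hy⟩, rfl⟩
        exact ⟨⟨V, hV, rfl⟩, hy⟩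
    rw [hpt, ncard_image_of_injective _ hinj]
    exact ⟨(hVpt _).1.image _, (hVpt _).2⟩

lemma covDimLE_zero_of_subsingleton [Subsingleton X] : CovDimLE X 0 := by
  intro 𝓤 _ hop hcov
  have hpt : ∀ x : X, {V | V ∈ 𝓤 ∩ {univ} ∧ x ∈ V} ⊆ {univ} := fun _ _ hV => hV.1.2
  refine ⟨𝓤 ∩ {univ}, fun V hV => hop V hV.1, ?_, fun V hV => ⟨V, hV.1, subset_rfl⟩,
    fun x => ⟨(finite_singleton _).subset (hpt x), ?_⟩⟩
  · refine eq_univ_of_forall fun x => ?_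
    obtain ⟨U, hU, hxU⟩ := mem_sUnion.mp (hcov ▸ mem_univ x)
    exact ⟨U, ⟨hU, Subsingleton.eq_univ_of_nonempty ⟨x, hxU⟩⟩, hxU⟩
  · simpa using ncard_le_ncard (hpt x)

lemma finDim_univ_iff : FinDim (univ : Set X) ↔ FinDim X :=
  ⟨fun ⟨n, h⟩ => ⟨n, h.of_homeomorph (Homeomorph.Set.univ X)⟩,
    fun ⟨n, h⟩ => ⟨n, h.of_homeomorph (Homeomorph.Set.univ X).symm⟩⟩

lemma Set.Subsingleton.mem_kfdSets {s : Set X} (hs : s.Subsingleton) : s ∈ kfdSets X :=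
  have := (subsingleton_coe s).mpr hs
  ⟨hs.isCompact, 0, covDimLE_zero_of_subsingleton⟩

lemma univ_mem_kfdSets_iff : univ ∈ kfdSets X ↔ CompactSpace X ∧ FinDim X := by
  rw [kfdSets, mem_ofPred_eq, isCompact_univ_iff, finDim_univ_iff]

def IsTCoverSmall (𝓣 : Set (Set X)) (C : Set X) : Prop :=
  ∀ 𝓤, IsTCover 𝓣 𝓤 → ∃ U ∈ 𝓤, C ⊆ U

lemma isTCoverSmall_of_subset_mem {𝓣 : Set (Set X)} {C T : Set X} (hT : T ∈ 𝓣) (hCT : C ⊆ T) :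
    IsTCoverSmall 𝓣 C := fun _ h𝓤 =>
  let ⟨U, hU, hTU⟩ := h𝓤.2.2 T hT
  ⟨U, hU, hCT.trans hTU⟩

lemma isTCover_compl_singleton_image [T1Space X] {𝓣 : Set (Set X)} {C : Set X}
    (hC : C.Nontrivial) (h𝓣 : ∀ T ∈ 𝓣, ¬ C ⊆ T) :
    IsTCover 𝓣 ((fun z => ({z}ᶜ : Set X)) '' C) := by
  refine ⟨?_, fun x => ?_, fun T hT => ?_⟩
  · rintro _ ⟨z, -, rfl⟩
    exact isOpen_compl_singleton
  · obtain ⟨z, hz, hzx⟩ := hC.exists_ne x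
    exact ⟨_, mem_image_of_mem _ hz, hzx.symm⟩
  · obtain ⟨z, hzC, hzT⟩ := not_subset.mp (h𝓣 T hT)
    exact ⟨_, mem_image_of_mem _ hzC, subset_compl_singleton_iff.mpr hzT⟩

lemma IsTCoverSmall.subsingleton_or_exists_subset [T1Space X] {𝓣 : Set (Set X)} {C : Set X}
    (hC : IsTCoverSmall 𝓣 C) : C.Subsingleton ∨ ∃ T ∈ 𝓣, C ⊆ T := by
  by_contra! h
  obtain ⟨_, ⟨z, hz, rfl⟩, hCz⟩ :=
    hC _ (isTCover_compl_singleton_image h.1 h.2)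
  exact hCz hz rfl

lemma isTCoverSmall_kfdSets_iff [T1Space X] {C : Set X} :
    IsTCoverSmall (kfdSets X) C ↔ ∃ K ∈ kfdSets X, C ⊆ K := by
  refine ⟨fun hC => ?_, fun ⟨K, hK, hCK⟩ => isTCoverSmall_of_subset_mem hK hCK⟩
  rcases hC.subsingleton_or_exists_subset with hs | hK
  · exact ⟨C, hs.mem_kfdSets, subset_rfl⟩
  · exact hK

lemma twoWins_one_iff {𝓣 : Set (Set X)} : TwoWins X 𝓣 1 ↔ IsTCoverSmall 𝓣 univ := by
  constructor
  · rintro ⟨F, hlegal, hwin⟩ 𝓤 h𝓤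
    refine ⟨F 0 zero_lt_one fun _ _ => 𝓤, hlegal 0 _ _ fun _ _ => h𝓤, fun x _ => ?_⟩
    obtain ⟨γ, hγ, hx⟩ := hwin (fun _ _ => 𝓤) (fun _ _ => h𝓤) x
    obtain rfl := Order.lt_one_iff.mp hγ
    exact hx
  · refine fun h => ⟨fun _ _ _ => univ, fun γ _ O hO => ?_, fun _ _ x => ⟨0, zero_lt_one, trivial⟩⟩
    obtain ⟨U, hU, hUuniv⟩ := h _ (hO γ le_rfl)
    rwa [univ_subset_iff.mp hUuniv] at hU

lemma twoWins_one_kfdSets_iff [T1Space X] :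
    TwoWins X (kfdSets X) 1 ↔ CompactSpace X ∧ FinDim X := by
  rw [twoWins_one_iff, isTCoverSmall_kfdSets_iff, ← univ_mem_kfdSets_iff]
  exact ⟨fun ⟨K, hK, hK'⟩ => univ_subset_iff.mp hK' ▸ hK, fun h => ⟨univ, h, subset_rfl⟩⟩

lemma twoWins_omega0_of_iUnion_eq_univ {𝓣 : Set (Set X)} {f : ℕ → Set X} (hf : ∀ n, f n ∈ 𝓣)
    (hfU : ⋃ n, f n = univ) : TwoWins X 𝓣 Ordinal.omega0 := by
  have hspec (O : Set (Set X)) (hO : IsTCover 𝓣 O) (n : ℕ) :=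
    Classical.epsilon_spec (p := fun U => U ∈ O ∧ f n ⊆ U) (hO.2.2 _ (hf n))
  refine ⟨fun γ _ O => Classical.epsilon fun U => U ∈ O γ le_rfl ∧ f γ.card.toNat ⊆ U,
    fun γ _ O hO => (hspec _ (hO γ le_rfl) _).1, fun O hO x => ?_⟩
  obtain ⟨n, hxn⟩ := mem_iUnion.mp (hfU ▸ mem_univ x)
  refine ⟨n, Ordinal.natCast_lt_omega0 n, (hspec _ (hO _ _) _).2 ?_⟩
  rwa [Ordinal.card_nat, Cardinal.toNat_natCast]

namespace IsWinningTwo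

variable {𝓣 : Set (Set X)} {F : TwoStrategy X Ordinal.omega0} {O : ℕ → Set (Set X)}

lemma onNat_mem (hF : IsWinningTwo 𝓣 Ordinal.omega0 F) (hO : ∀ j, IsTCover 𝓣 (O j)) (k : ℕ) :
    F.onNat O k ∈ O k := by
  have := hF.1 k (Ordinal.natCast_lt_omega0 k) (fun β _ => O β.card.toNat) fun _ _ => hO _
  rwa [Ordinal.card_nat, Cardinal.toNat_natCast] at this

lemma exists_mem_onNat (hF : IsWinningTwo 𝓣 Ordinal.omega0 F) (hO : ∀ j, IsTCover 𝓣 (O j))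
    (x : X) : ∃ k, x ∈ F.onNat O k := by
  obtain ⟨γ, hγ, hx⟩ := hF.2 (fun γ _ => O γ.card.toNat) (fun _ _ => hO _) x
  obtain ⟨k, rfl⟩ := Ordinal.lt_omega0.mp hγ
  exact ⟨k, hx⟩

end IsWinningTwo

lemma exists_countable_isOpen_between_isCompact [SecondCountableTopology X] :
    ∃ B : Set (Set X), B.Countable ∧ (∀ W ∈ B, IsOpen W) ∧
      ∀ K V, IsCompact K → IsOpen V → K ⊆ V → ∃ W ∈ B, K ⊆ W ∧ W ⊆ V := by
  open TopologicalSpace in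
  refine ⟨sUnion '' {s | s.Finite ∧ s ⊆ countableBasis X},
    (countable_ofPred_finite_subset (countable_countableBasis X)).image _, ?_, ?_⟩
  · rintro _ ⟨s, ⟨-, hs⟩, rfl⟩
    exact isOpen_sUnion fun u hu => isOpen_of_mem_countableBasis (hs hu)
  · intro K V hK hV hKV
    have hV' := (isBasis_countableBasis X).open_eq_sUnion' hV
    rw [hV', sUnion_eq_biUnion] at hKV
    obtain ⟨s, hs, hsf, hKs⟩ := hK.elim_finite_subcover_image (c := id)
      (fun u hu => isOpen_of_mem_countableBasis hu.1) hKV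
    exact ⟨⋃₀ s, ⟨s, ⟨hsf, fun u hu => (hs hu).1⟩, rfl⟩, by rwa [sUnion_eq_biUnion],
      sUnion_subset fun u hu => (hs hu).2⟩

lemma exists_countable_isTCover_refinement [SecondCountableTopology X] {𝓣 : Set (Set X)}
    (h𝓣 : ∀ T ∈ 𝓣, IsCompact T) : ∃ B : Set (Set X), B.Countable ∧
      ∀ 𝓥, IsTCover 𝓣 𝓥 → IsTCover 𝓣 {W ∈ B | ∃ V ∈ 𝓥, W ⊆ V} := by
  obtain ⟨B, hBc, hBo, hB⟩ := exists_countable_isOpen_between_isCompact (X := X)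
  have hrefine {𝓥 : Set (Set X)} (h𝓥 : ∀ V ∈ 𝓥, IsOpen V) {K : Set X} (hK : IsCompact K)
      (hK𝓥 : ∃ V ∈ 𝓥, K ⊆ V) : ∃ W ∈ {W ∈ B | ∃ V ∈ 𝓥, W ⊆ V}, K ⊆ W := by
    obtain ⟨V, hV, hKV⟩ := hK𝓥
    obtain ⟨W, hW, hKW, hWV⟩ := hB K V hK (h𝓥 V hV) hKV
    exact ⟨W, ⟨hW, V, hV, hWV⟩, hKW⟩
  refine ⟨B, hBc, fun 𝓥 ⟨h𝓥o, h𝓥x, h𝓥T⟩ => ⟨fun W hW => hBo W hW.1, fun x => ?_,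
    fun T hT => hrefine h𝓥o (h𝓣 T hT) (h𝓥T T hT)⟩⟩
  obtain ⟨W, hW, hxW⟩ := hrefine h𝓥o isCompact_singleton
    (let ⟨V, hV, hxV⟩ := h𝓥x x; ⟨V, hV, singleton_subset_iff.mpr hxV⟩)
  exact ⟨W, hW, singleton_subset_iff.mp hxW⟩

theorem exists_isTCoverSmall_cover_of_twoWins_omega0 [SecondCountableTopology X]
    {𝓣 : Set (Set X)} (h𝓣 : ∀ T ∈ 𝓣, IsCompact T) (hwin : TwoWins X 𝓣 Ordinal.omega0) :
    ∃ C : ℕ → Set X, (∀ n, IsTCoverSmall 𝓣 (C n)) ∧ ⋃ n, C n = univ := by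
  obtain ⟨B, hBc, hB⟩ := exists_countable_isTCover_refinement h𝓣
  obtain ⟨F, hF⟩ := hwin
  let M : Set (Set (Set X)) := {U | IsTCover 𝓣 U ∧ U ⊆ B}
  have hBM {𝓥} (h𝓥 : IsTCover 𝓣 𝓥) : {W ∈ B | ∃ V ∈ 𝓥, W ⊆ V} ∈ M :=
    ⟨hB 𝓥 h𝓥, fun _ hW => hW.1⟩
  have hunivM := hBM (𝓥 := {univ}) ⟨fun _ h => h ▸ isOpen_univ, fun _ => ⟨univ, rfl, trivial⟩,
    fun _ _ => ⟨univ, rfl, subset_univ _⟩⟩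
  obtain ⟨h, k, hhM, hforce⟩ := exists_positions_forcing_of_winning (σ := F.onNat) (R := B)
    ⟨_, hunivM⟩ hBc (fun _ _ _ => TwoStrategy.onNat_congr)
    (fun O hO k => (hO k).2 (hF.onNat_mem (fun j => (hO j).1) k))
    (fun O hO => hF.exists_mem_onNat fun j => (hO j).1)
  refine ⟨fun n => ⋂ U ∈ M, F.onNat (update (h n) (k n) U) (k n), fun n 𝓥 h𝓥 => ?_,
    eq_univ_of_forall fun x => mem_iUnion.mpr ((hforce x).imp fun n hn => mem_iInter₂.mpr hn)⟩
  have hmem := hF.onNat_mem (O := update (h n) (k n) {W ∈ B | ∃ V ∈ 𝓥, W ⊆ V})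
    ((forall_update_iff _ fun _ V => IsTCover 𝓣 V).mpr ⟨(hBM h𝓥).1, fun j _ => (hhM n j).1⟩) (k n)
  rw [update_self] at hmem
  obtain ⟨-, V, hV, hWV⟩ := hmem
  exact ⟨V, hV, (biInter_subset_of_mem (hBM h𝓥)).trans hWV⟩

theorem exists_kfdSets_cover_of_twoWins_omega0 [T1Space X] [SecondCountableTopology X]
    (hwin : TwoWins X (kfdSets X) Ordinal.omega0) :
    ∃ f : ℕ → Set X, (∀ n, f n ∈ kfdSets X) ∧ ⋃ n, f n = univ := by
  obtain ⟨C, hC, hCU⟩ := exists_isTCoverSmall_cover_of_twoWins_omega0 (fun _ hT => hT.1) hwin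
  choose K hK hCK using fun n => isTCoverSmall_kfdSets_iff.mp (hC n)
  exact ⟨K, hK, univ_subset_iff.mp (hCU ▸ iUnion_mono hCK)⟩

end

theorem statement_2 {X : Type*} [MetricSpace X] [TopologicalSpace.SeparableSpace X] :
    ((∃ f : ℕ → Set X, (∀ n, f n ∈ kfdSets X) ∧ (⋃ n, f n) = Set.univ) ∧
      ¬ (CompactSpace X ∧ FinDim X)) ↔
    (TwoWins X (kfdSets X) Ordinal.omega0 ∧ ¬ TwoWins X (kfdSets X) 1) := by
  rw [twoWins_one_kfdSets_iff]
  refine and_congr_left fun _ => ⟨fun ⟨f, hf, hfU⟩ => twoWins_omega0_of_iUnion_eq_univ hf hfU,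
    exists_kfdSets_cover_of_twoWins_omega0⟩
end

section
/- Let X be a separable metric space and Y a closed subspace of X. If TWO has a winning strategy in the game G_c^α(𝓞,𝓞) on X for some ordinal α, then TWO has a winning strategy in G_c^α(𝓞,𝓞) on Y; consequently dim_G(Y) ≤ dim_G(X). -/
open Set Topology

/-!
TWO plays on the closed subspace `Y` by simulating a winning strategy on `X`: a cover `𝓤` of `Y`
is answered as if ONE had played on `X` the open sets whose traces on `Y` lie in `𝓤`, together
with `Yᶜ`, which is open because `Y` is closed; TWO's answers are then traced back onto `Y`.
Pieces lying inside `Yᶜ` trace to `∅` and are dropped, every other piece refines a trace in `𝓤`,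
and a point of `Y` covered in the simulated play is covered by its trace.
-/

section ClosedSubspace

variable {X : Type*} [TopologicalSpace X] {Y : Set X} {α : Ordinal.{0}}

def extendCover (Y : Set X) (𝓤 : Set (Set Y)) : Set (Set X) :=
  {U | IsOpen U ∧ Subtype.val ⁻¹' U ∈ 𝓤} ∪ {Yᶜ}

theorem IsOpenCover.extendCover {𝓤 : Set (Set Y)} (h𝓤 : IsOpenCover 𝓤) (hY : IsClosed Y) :
    IsOpenCover (extendCover Y 𝓤) := by
  constructor
  · rintro U (⟨hU, -⟩ | rfl)
    · exact hU
    · exact hY.isOpen_compl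
  · intro x
    by_cases hx : x ∈ Y
    · obtain ⟨U, hU𝓤, hxU⟩ := h𝓤.2 ⟨x, hx⟩
      obtain ⟨U', hU', rfl⟩ := isOpen_induced_iff.mp (h𝓤.1 U hU𝓤)
      exact ⟨U', Or.inl ⟨hU', hU𝓤⟩, hxU⟩
    · exact ⟨Yᶜ, Or.inr rfl, hx⟩

def TwoStrategyC.restrict (F : TwoStrategyC X α) (Y : Set X) : TwoStrategyC Y α :=
  fun γ hγ O => (Subtype.val ⁻¹' ·) '' F γ hγ (fun β hβ => extendCover Y (O β hβ)) ∩
    {W | ∃ U ∈ O γ le_rfl, W ⊆ U}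

theorem IsWinningTwoC.restrict {F : TwoStrategyC X α} (hF : IsWinningTwoC α F)
    (hY : IsClosed Y) : IsWinningTwoC α (F.restrict Y) := by
  constructor
  · intro γ hγ O hO
    obtain ⟨hopen, hdisj, -⟩ := hF.1 γ hγ _ fun β hβ => (hO β hβ).extendCover hY
    refine ⟨?_, ?_, fun W hW => hW.2⟩
    · rintro W ⟨⟨V, hV, rfl⟩, -⟩
      exact (hopen V hV).preimage continuous_subtype_val
    · exact ((hdisj.mono' fun V₁ V₂ h => h.preimage _).image).mono inter_subset_left
  · intro O hO y
    have hO' γ hγ := (hO γ hγ).extendCover hY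
    obtain ⟨γ, hγ, V, hV, hyV⟩ := hF.2 (fun γ hγ => extendCover Y (O γ hγ)) hO' y
    obtain ⟨U, hU, hVU⟩ := (hF.1 γ hγ _ fun β hβ => hO' β _).2.2 V hV
    refine ⟨γ, hγ, Subtype.val ⁻¹' V, ⟨⟨V, hV, rfl⟩, ?_⟩, hyV⟩
    rcases hU with ⟨-, hU⟩ | rfl
    · exact ⟨_, hU, preimage_mono hVU⟩
    · exact absurd y.2 (hVU hyV)

theorem TwoWinsC.subtype (h : TwoWinsC X α) (hY : IsClosed Y) : TwoWinsC Y α :=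
  let ⟨F, hF⟩ := h
  ⟨F.restrict Y, hF.restrict hY⟩

end ClosedSubspace

theorem statement_13_general {X : Type*} [MetricSpace X]
    (Y : Set X) (hY : IsClosed Y) :
    (∀ α : Ordinal.{0}, TwoWinsC X α → TwoWinsC ↥Y α) ∧
    (∀ d : Ordinal.{0}, TPCEq X (1 + d) → TPCLe ↥Y (1 + d)) :=
  ⟨fun _ h => h.subtype hY, fun _ hd => ⟨_, le_rfl, hd.1.subtype hY⟩⟩

theorem statement_13 {X : Type*} [MetricSpace X] [TopologicalSpace.SeparableSpace X]
    (Y : Set X) (hY : IsClosed Y) :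
    (∀ α : Ordinal.{0}, TwoWinsC X α → TwoWinsC ↥Y α) ∧
    (∀ d : Ordinal.{0}, TPCEq X (1 + d) → TPCLe ↥Y (1 + d)) :=
  statement_13_general Y hY
end

section
/- For a separable metric space X the following are equivalent: (1) X satisfies S_c(𝓞,𝓞); (2) X satisfies S_c(𝓞_kfd,𝓞); (3) X satisfies S_c(𝓞_fd,𝓞). -/
open Set Topology

/-- The selection principle `S_c(𝓐,𝓞)`. -/
def ScSel (X : Type*) [TopologicalSpace X] (𝓐 : Set (Set (Set X))) : Prop :=
  ∀ A : ℕ → Set (Set X), (∀ n, A n ∈ 𝓐) →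
    ∃ B : ℕ → Set (Set X),
      (∀ n, (∀ V ∈ B n, IsOpen V) ∧ (B n).Pairwise Disjoint ∧
        ∀ V ∈ B n, ∃ U ∈ A n, V ⊆ U) ∧
      ∀ x : X, ∃ n, ∃ V ∈ B n, x ∈ V


/-!
Since `𝓞_fd`-covers are `𝓞_kfd`-covers and both are open covers, only the implication from
`S_c(𝓞_fd, 𝓞)` to `S_c(𝓞, 𝓞)` needs proof. Its core is an Ostrand-type fact: if `dim T ≤ d`,
then any open covers `H 0, …, H d` of `X` have pairwise disjoint open refinements `G c` that
together cover `T`. Hence, for open covers `(A k)`, the unions `⋃ j, ⋃₀ G j` of disjoint refinements of the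
covers `A (Nat.pair n j)` form an `𝓞_fd`-cover `W n`; a selection of disjoint refinements of the
`W n`, intersected with the families `G j` its members come from, is a selection for `(A k)`.

For the Ostrand-type fact, take a countable open cover `O` refining all `H c`, `c ≤ d`. The
finite-cover definition of dimension, applied on the closed level sets of a Lipschitz "depth"
function where only finitely many `O i` survive, yields sets `A i ⊆ O i` covering `T` with
order `≤ d + 1` on `T`, such that every `x ∈ T` has a neighbourhood meeting only the `A i`
containing `x`. With `σ = {i | x ∈ A i}`, the point `x` lies in the cell of points closer to
each `A i`, `i ∈ σ`, than to any `A j`, `j ∉ σ`; cells with the same number of indices are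
disjoint, so the number of indices, at most `d + 1`, serves as the colour.
-/

noncomputable section

open Metric ENNReal Filter

section Depth

variable {X : Type*} [PseudoEMetricSpace X] (S : ℕ → Set X)

def depth (i : ℕ) (x : X) : ℝ≥0∞ := min (2⁻¹ ^ i) (infEDist x (S i)ᶜ)

def supDepth (x : X) : ℝ≥0∞ := ⨆ i, depth S i x

/-- The caps `2⁻¹ ^ i` in `depth` make this shrinking of `S` locally finite on `⋃ i, S i`. -/
def deepPart (i : ℕ) : Set X := {x | supDepth S x / 2 < depth S i x}

lemma depth_le_pow (i : ℕ) (x : X) : depth S i x ≤ 2⁻¹ ^ i := min_le_left _ _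

lemma depth_le_add_edist (i : ℕ) (x y : X) : depth S i x ≤ depth S i y + edist x y :=
  calc depth S i x ≤ min (2⁻¹ ^ i) (infEDist y (S i)ᶜ + edist x y) :=
        min_le_min_left _ infEDist_le_infEDist_add_edist
    _ ≤ depth S i y + edist x y := by
        rw [depth, ← min_add_add_right]; exact min_le_min_right _ le_self_add

lemma continuous_depth (i : ℕ) : Continuous (depth S i) :=
  continuous_const.min continuous_infEDist

lemma continuous_supDepth : Continuous (supDepth S) :=
  continuous_of_le_add_edist 1 one_ne_top fun x y => by
    rw [one_mul]
    exact iSup_le fun i =>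
      (depth_le_add_edist S i x y).trans (by gcongr; exact le_iSup (depth S · y) i)

lemma supDepth_ne_top (x : X) : supDepth S x ≠ ⊤ :=
  ne_top_of_le_ne_top one_ne_top <| iSup_le fun i =>
    (depth_le_pow S i x).trans (pow_le_one₀ zero_le (by norm_num))

lemma isOpen_deepPart (i : ℕ) : IsOpen (deepPart S i) :=
  isOpen_lt ((ENNReal.continuous_div_const 2 two_ne_zero).comp (continuous_supDepth S))
    (continuous_depth S i)

variable {S}

lemma mem_of_depth_pos {i : ℕ} {x : X} (h : 0 < depth S i x) : x ∈ S i := by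
  by_contra hx
  rw [depth, infEDist_zero_of_mem (show x ∈ (S i)ᶜ from hx), min_eq_right zero_le] at h
  exact h.false

lemma depth_pos_of_mem {i : ℕ} {x : X} (hS : IsOpen (S i)) (hx : x ∈ S i) : 0 < depth S i x := by
  rw [depth, lt_min_iff, infEDist_pos_iff_notMem_closure, hS.isClosed_compl.closure_eq]
  exact ⟨ENNReal.pow_pos (by norm_num) _, not_not.mpr hx⟩

lemma supDepth_pos_iff (hS : ∀ i, IsOpen (S i)) {x : X} : 0 < supDepth S x ↔ x ∈ ⋃ i, S i := by
  simp only [supDepth, lt_iSup_iff, mem_iUnion]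
  exact exists_congr fun i => ⟨mem_of_depth_pos, depth_pos_of_mem (hS i)⟩

lemma deepPart_subset (i : ℕ) : deepPart S i ⊆ S i :=
  fun _ hx => mem_of_depth_pos (zero_le.trans_lt hx)

lemma iUnion_deepPart (hS : ∀ i, IsOpen (S i)) : ⋃ i, deepPart S i = ⋃ i, S i := by
  refine (iUnion_mono deepPart_subset).antisymm fun x hx => ?_
  have hpos := (supDepth_pos_iff hS).2 hx
  have := ENNReal.half_lt_self hpos.ne' (supDepth_ne_top S x)
  rw [supDepth, lt_iSup_iff] at this
  exact mem_iUnion.2 this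

lemma mem_of_mem_closure_deepPart (hS : ∀ i, IsOpen (S i)) {i : ℕ} {x : X}
    (hx : x ∈ ⋃ i, S i) (hcl : x ∈ closure (deepPart S i)) : x ∈ S i := by
  have hle : supDepth S x / 2 ≤ depth S i x :=
    closure_minimal (fun _ => le_of_lt)
      (isClosed_le ((ENNReal.continuous_div_const 2 two_ne_zero).comp (continuous_supDepth S))
        (continuous_depth S i)) hcl
  exact mem_of_depth_pos ((ENNReal.half_pos ((supDepth_pos_iff hS).2 hx).ne').trans_le hle)

lemma index_le_of_mem_deepPart {m i : ℕ} {x : X} (hx : 2⁻¹ ^ m ≤ supDepth S x)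
    (hi : x ∈ deepPart S i) : i ≤ m := by
  have : (2⁻¹ : ℝ≥0∞) ^ (m + 1) < 2⁻¹ ^ i :=
    calc (2⁻¹ : ℝ≥0∞) ^ (m + 1) = 2⁻¹ ^ m / 2 := by rw [pow_succ, ENNReal.div_eq_inv_mul, mul_comm]
      _ ≤ supDepth S x / 2 := by gcongr
      _ < 2⁻¹ ^ i := hi.trans_le (depth_le_pow S i x)
  by_contra! hmi
  exact (pow_le_pow_right_of_le_one' (by norm_num) hmi).not_gt this

lemma eventually_pow_le_supDepth (hS : ∀ i, IsOpen (S i)) {x : X} (hx : x ∈ ⋃ i, S i) :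
    ∃ m, ∀ᶠ y in 𝓝 x, 2⁻¹ ^ m ≤ supDepth S y := by
  obtain ⟨m, hm⟩ := ENNReal.exists_inv_two_pow_lt ((supDepth_pos_iff hS).2 hx).ne'
  exact ⟨m, ((continuous_supDepth S).continuousAt.eventually (lt_mem_nhds hm)).mono
    fun _ hy => hy.le⟩

end Depth

section FiniteShrink

variable {X : Type*} [TopologicalSpace X] {T : Set X} {d : ℕ}

lemma CovDimLE.exists_shrink (hT : CovDimLE T d) {ι : Type*} [Finite ι] {O : ι → Set X}
    (hO : ∀ i, IsOpen (O i)) (hTO : T ⊆ ⋃ i, O i) :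
    ∃ P : ι → Set X, (∀ i, IsOpen (P i)) ∧ (∀ i, P i ⊆ O i) ∧ T ⊆ ⋃ i, P i ∧
      ∀ x ∈ T, {i | x ∈ P i}.encard ≤ d + 1 := by
  cases isEmpty_or_nonempty ι
  · exact ⟨O, hO, fun _ => subset_rfl, hTO, fun x hx => by simpa using hTO hx⟩
  obtain ⟨𝓥, h𝓥o, h𝓥cov, h𝓥ref, h𝓥ord⟩ := hT (range fun i => ((↑) : T → X) ⁻¹' O i)
    (finite_range _) (forall_mem_range.2 fun i => (hO i).preimage continuous_subtype_val)
    (eq_univ_of_forall fun x => by simpa using hTO x.2)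
  have hlift : ∀ V ∈ 𝓥, ∃ (U : Set X) (i : ι),
      IsOpen U ∧ (↑) ⁻¹' U = V ∧ V ⊆ ((↑) : T → X) ⁻¹' O i := by
    intro V hV
    obtain ⟨U, hU, rfl⟩ := isOpen_induced_iff.1 (h𝓥o V hV)
    obtain ⟨_, ⟨i, rfl⟩, hVi⟩ := h𝓥ref _ hV
    exact ⟨U, i, hU, rfl, hVi⟩
  choose! U idx hUo hUV hVO using hlift
  refine ⟨fun i => ⋃ V ∈ {V ∈ 𝓥 | idx V = i}, U V ∩ O i,
    fun i => isOpen_biUnion fun V hV => (hUo V hV.1).inter (hO i),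
    fun i => iUnion₂_subset fun _ _ => inter_subset_right, fun x hx => ?_, fun x hx => ?_⟩
  · obtain ⟨V, hV, hxV⟩ := mem_sUnion.1 (h𝓥cov.symm ▸ mem_univ (⟨x, hx⟩ : T))
    refine mem_iUnion.2 ⟨idx V, mem_biUnion ⟨hV, rfl⟩ ⟨?_, hVO V hV hxV⟩⟩
    rw [← hUV V hV] at hxV
    exact hxV
  · have hsub : {i | x ∈ ⋃ V ∈ {V ∈ 𝓥 | idx V = i}, U V ∩ O i} ⊆
        idx '' {V | V ∈ 𝓥 ∧ ⟨x, hx⟩ ∈ V} := by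
      intro i hi
      simp only [mem_ofPred_eq, mem_iUnion, exists_prop] at hi
      obtain ⟨V, ⟨hV, rfl⟩, hxU, -⟩ := hi
      exact ⟨V, ⟨hV, by rw [← hUV V hV]; exact hxU⟩, rfl⟩
    calc _ ≤ _ := encard_le_encard hsub
      _ ≤ _ := encard_image_le _ _
      _ = {V | V ∈ 𝓥 ∧ ⟨x, hx⟩ ∈ V}.ncard := (h𝓥ord _).1.cast_ncard_eq.symm
      _ ≤ d + 1 := by exact_mod_cast (h𝓥ord _).2

/-- Only finitely many `B i` meet `C`, so the finite case applies to `B ∪ {Cᶜ}`; off `C` the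
old sets are kept. -/
lemma CovDimLE.exists_shrink_orderLE_on (hT : CovDimLE T d) {C : Set X} (hC : IsClosed C)
    {B : ℕ → Set X} (hB : ∀ i, IsOpen (B i)) (hTB : T ⊆ ⋃ i, B i) {m : ℕ}
    (hCB : ∀ x ∈ C, ∀ i, x ∈ B i → i ≤ m) :
    ∃ B' : ℕ → Set X, (∀ i, IsOpen (B' i)) ∧ (∀ i, B' i ⊆ B i) ∧ T ⊆ ⋃ i, B' i ∧
      ∀ x ∈ T ∩ C, {i | x ∈ B' i}.encard ≤ d + 1 := by
  let O : Option (Fin (m + 1)) → Set X := fun o => o.elim Cᶜ fun i => B i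
  have hTO : T ⊆ ⋃ o, O o := by
    intro x hx
    by_cases hxC : x ∈ C
    · obtain ⟨i, hi⟩ := mem_iUnion.1 (hTB hx)
      exact mem_iUnion.2 ⟨some ⟨i, Nat.lt_succ_of_le (hCB x hxC i hi)⟩, hi⟩
    · exact mem_iUnion.2 ⟨none, hxC⟩
  obtain ⟨P, hPo, hPO, hTP, hPord⟩ :=
    hT.exists_shrink (by rintro (_ | i); exacts [hC.isOpen_compl, hB i]) hTO
  let B' : ℕ → Set X := fun i => if h : i < m + 1 then P (some ⟨i, h⟩) ∪ (B i \ C) else B i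
  have hB'B : ∀ i, B' i ⊆ B i := by
    intro i; dsimp only [B']; split_ifs; exacts [union_subset (hPO _) sdiff_subset, subset_rfl]
  refine ⟨B', ?_, hB'B, ?_, ?_⟩
  · intro i; dsimp only [B']; split_ifs; exacts [(hPo _).union ((hB i).sdiff hC), hB i]
  · intro x hx
    obtain ⟨o, hxo⟩ := mem_iUnion.1 (hTP hx)
    cases o with
    | none =>
      obtain ⟨i, hi⟩ := mem_iUnion.1 (hTB hx)
      refine mem_iUnion.2 ⟨i, ?_⟩
      dsimp only [B']; split_ifs; exacts [Or.inr ⟨hi, hPO none hxo⟩, hi]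
    | some i => exact mem_iUnion.2 ⟨i, by simp [B', Nat.lt_succ_iff.1 i.2, hxo]⟩
  · rintro x ⟨hxT, hxC⟩
    have hsub : {i | x ∈ B' i} ⊆ (fun o => o.elim 0 fun i => (i : ℕ)) '' {o | x ∈ P o} := by
      intro i hi
      have him : i < m + 1 := Nat.lt_succ_of_le (hCB x hxC i (hB'B i hi))
      have hi' : x ∈ P (some ⟨i, him⟩) ∪ (B i \ C) := by
        simpa only [B', mem_ofPred_eq, dif_pos him] using hi
      exact ⟨_, hi'.resolve_right fun h => h.2 hxC, rfl⟩
    exact (encard_le_encard hsub).trans ((encard_image_le _ _).trans (hPord x hxT))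

end FiniteShrink

theorem exists_seq_of_forall_exists {α : Type*} {p : α → Prop} {r : ℕ → α → α → Prop} {a : α}
    (ha : p a) (h : ∀ n a, p a → ∃ b, p b ∧ r n a b) :
    ∃ s : ℕ → α, ∀ n, p (s n) ∧ r n (s n) (s (n + 1)) := by
  have : Nonempty α := ⟨a⟩
  choose! f hf using h
  let s : ℕ → α := fun n => Nat.rec a (fun n b => f n b) n
  have hp : ∀ n, p (s n) := fun n => Nat.rec ha (fun n ih => (hf n _ ih).1) n
  exact ⟨s, fun n => ⟨hp n, (hf n _ (hp n)).2⟩⟩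

section CountableShrink

variable {X : Type*} [PseudoEMetricSpace X] {T : Set X} {d : ℕ}

lemma CovDimLE.exists_shrink_step (hT : CovDimLE T d) {C : Set X} (hC : IsClosed C)
    {B : ℕ → Set X} (hB : ∀ i, IsOpen (B i)) (hTB : T ⊆ ⋃ i, B i) {m : ℕ}
    (hCB : ∀ x ∈ C, ∀ i, x ∈ B i → i ≤ m) :
    ∃ B' : ℕ → Set X, (∀ i, IsOpen (B' i)) ∧ (∀ i, B' i ⊆ B i) ∧ T ⊆ ⋃ i, B' i ∧
      (∀ x ∈ T ∩ C, {i | x ∈ B' i}.encard ≤ d + 1) ∧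
      ∀ i, ∀ x ∈ T, x ∈ closure (B' i) → x ∈ B i := by
  obtain ⟨B₁, hB₁o, hB₁B, hTB₁, hord⟩ := hT.exists_shrink_orderLE_on hC hB hTB hCB
  exact ⟨deepPart B₁, isOpen_deepPart B₁, fun i => (deepPart_subset i).trans (hB₁B i),
    hTB₁.trans (iUnion_deepPart hB₁o).ge,
    fun x hx => (encard_le_encard fun i hi => deepPart_subset (S := B₁) i hi).trans (hord x hx),
    fun i x hx hcl => hB₁B i (mem_of_mem_closure_deepPart hB₁o (hTB₁ hx) hcl)⟩

/-- The `m`-th stage makes the order at most `d + 1` on the closed level set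
`{x | 2⁻¹ ^ m ≤ supDepth O x}`, on which only `deepPart O 0, …, deepPart O m` live; the limit
`A i` is the intersection of the stages, and the closures of consecutive stages are nested
on `T`, so a point of `T` outside `A i` stays away from `A i`. -/
lemma CovDimLE.exists_refinement (hT : CovDimLE T d) {O : ℕ → Set X}
    (hO : ∀ i, IsOpen (O i)) (hTO : T ⊆ ⋃ i, O i) :
    ∃ A : ℕ → Set X, (∀ i, A i ⊆ O i) ∧ ∀ x ∈ T, (∃ i, x ∈ A i) ∧
      {i | x ∈ A i}.encard ≤ d + 1 ∧ ∀ᶠ y in 𝓝 x, ∀ i, y ∈ A i → x ∈ A i := by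
  let C : ℕ → Set X := fun m => {x | 2⁻¹ ^ m ≤ supDepth O x}
  obtain ⟨s, hs⟩ := exists_seq_of_forall_exists
    (p := fun B : ℕ → Set X => (∀ i, IsOpen (B i)) ∧ (∀ i, B i ⊆ deepPart O i) ∧ T ⊆ ⋃ i, B i)
    (r := fun m (B B' : ℕ → Set X) => (∀ i, B' i ⊆ B i) ∧
      (∀ x ∈ T ∩ C m, {i | x ∈ B' i}.encard ≤ d + 1) ∧
      ∀ i, ∀ x ∈ T, x ∈ closure (B' i) → x ∈ B i)
    ⟨isOpen_deepPart O, fun _ => subset_rfl, hTO.trans (iUnion_deepPart hO).ge⟩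
    fun m B ⟨hBo, hBQ, hTB⟩ => by
      obtain ⟨B', hB'o, hB'B, hTB', hord, hcl⟩ :=
        hT.exists_shrink_step (isClosed_le continuous_const (continuous_supDepth O)) hBo hTB
          fun x hx i hi => index_le_of_mem_deepPart hx (hBQ i hi)
      exact ⟨B', ⟨hB'o, fun i => (hB'B i).trans (hBQ i), hTB'⟩, hB'B, hord, hcl⟩
  have hanti : ∀ i, Antitone (s · i) := fun i => antitone_nat_of_succ_le fun m => (hs m).2.1 i
  refine ⟨fun i => ⋂ m, s m i,
    fun i => (iInter_subset _ 0).trans (((hs 0).1.2.1 i).trans (deepPart_subset i)),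
    fun x hx => ?_⟩
  obtain ⟨N, hN⟩ := eventually_pow_le_supDepth hO (hTO hx)
  have hlf : ∀ᶠ y in 𝓝 x, ∀ m i, y ∈ s m i → i ≤ N :=
    hN.mono fun y hy m i hi => index_le_of_mem_deepPart hy ((hs m).1.2.1 i hi)
  refine ⟨?_, ?_, ?_⟩
  · by_contra! h
    simp only [mem_iInter, not_forall] at h
    choose m hm using h
    let M := (Finset.range (N + 1)).sup m
    obtain ⟨i, hi⟩ := mem_iUnion.1 ((hs M).1.2.2 hx)
    have hiN : i ≤ N := hlf.self_of_nhds M i hi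
    exact hm i (hanti i (Finset.le_sup (Finset.mem_range_succ_iff.2 hiN)) hi)
  · refine (encard_le_encard fun i hi => ?_).trans ((hs N).2.2.1 x ⟨hx, hN.self_of_nhds⟩)
    exact mem_iInter.1 hi (N + 1)
  · have hsep : ∀ i ∈ Iic N, ∀ᶠ y in 𝓝 x, y ∈ ⋂ m, s m i → x ∈ ⋂ m, s m i := by
      intro i _
      by_cases hxi : x ∈ ⋂ m, s m i
      · exact Eventually.of_forall fun _ _ => hxi
      obtain ⟨m, hm⟩ := by simpa only [mem_iInter, not_forall] using hxi
      have hncl : x ∉ closure (s (m + 1) i) := fun hcl => hm ((hs m).2.2.2 i x hx hcl)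
      rw [mem_closure_iff_frequently, not_frequently] at hncl
      exact hncl.mono fun y hy hyA => absurd (mem_iInter.1 hyA (m + 1)) hy
    filter_upwards [hlf, (eventually_all_finite (finite_Iic N)).2 hsep] with y hy hy' i hi
    exact hy' i (hy 0 i (mem_iInter.1 hi 0)) hi

end CountableShrink

section Cells

variable {X : Type*} [PseudoEMetricSpace X] (O A : ℕ → Set X)

def cell (σ : Finset ℕ) : Set X :=
  ⋂ i ∈ σ, O i ∩ {y | infEDist y (A i) < infEDist y (⋃ j ∉ σ, A j)}

variable {O A}

lemma isOpen_cell (hO : ∀ i, IsOpen (O i)) (σ : Finset ℕ) : IsOpen (cell O A σ) :=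
  isOpen_biInter_finset fun i _ => (hO i).inter (isOpen_lt continuous_infEDist continuous_infEDist)

lemma cell_subset {σ : Finset ℕ} {i : ℕ} (hi : i ∈ σ) : cell O A σ ⊆ O i :=
  fun _ hy => (mem_iInter₂.1 hy i hi).1

/-- A point of both cells would be strictly closer to `A i` than to `A j` and vice versa,
for some `i ∈ σ \ τ` and `j ∈ τ \ σ`. -/
lemma disjoint_cell {σ τ : Finset ℕ} (hne : σ ≠ τ) (hcard : σ.card = τ.card) :
    Disjoint (cell O A σ) (cell O A τ) := by
  obtain ⟨i, hiσ, hiτ⟩ :=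
    Finset.not_subset.1 fun h => hne (Finset.eq_of_subset_of_card_le h hcard.ge)
  obtain ⟨j, hjτ, hjσ⟩ :=
    Finset.not_subset.1 fun h => hne (Finset.eq_of_subset_of_card_le h hcard.le).symm
  refine disjoint_left.2 fun y hσ hτ => ?_
  have hij : infEDist y (A i) < infEDist y (A j) :=
    (mem_iInter₂.1 hσ i hiσ).2.trans_le
      (infEDist_anti (subset_iUnion₂ (s := fun j (_ : j ∉ σ) => A j) j hjσ))
  have hji : infEDist y (A j) < infEDist y (A i) :=
    (mem_iInter₂.1 hτ j hjτ).2.trans_le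
      (infEDist_anti (subset_iUnion₂ (s := fun j (_ : j ∉ τ) => A j) i hiτ))
  exact hij.asymm hji

lemma pairwise_disjoint_image_cell (k : ℕ) : (cell O A '' {σ | σ.card = k}).Pairwise Disjoint := by
  rintro _ ⟨σ, hσ, rfl⟩ _ ⟨τ, hτ, rfl⟩ hne
  exact disjoint_cell (fun h => hne (h ▸ rfl)) (hσ.trans hτ.symm)

lemma exists_mem_cell (hAO : ∀ i, A i ⊆ O i) {d : ℕ} {x : X} (hne : ∃ i, x ∈ A i)
    (hord : {i | x ∈ A i}.encard ≤ d + 1) (hloc : ∀ᶠ y in 𝓝 x, ∀ i, y ∈ A i → x ∈ A i) :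
    ∃ σ : Finset ℕ, σ.Nonempty ∧ σ.card ≤ d + 1 ∧ x ∈ cell O A σ := by
  have hfin : {i | x ∈ A i}.Finite := finite_of_encard_le_coe (k := d + 1) (by exact_mod_cast hord)
  refine ⟨hfin.toFinset, hfin.toFinset_nonempty.2 hne, ?_, mem_iInter₂.2 fun i hi => ?_⟩
  · rw [hfin.encard_eq_coe_toFinset_card] at hord
    exact_mod_cast hord
  have hxA : x ∈ A i := hfin.mem_toFinset.1 hi
  have hfar : x ∉ closure (⋃ j ∉ hfin.toFinset, A j) := fun hcl => by
    obtain ⟨y, hy, hyloc⟩ := ((mem_closure_iff_frequently.1 hcl).and_eventually hloc).exists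
    obtain ⟨j, hj, hyj⟩ := mem_iUnion₂.1 hy
    exact hj (hfin.mem_toFinset.2 (hyloc j hyj))
  refine ⟨hAO i hxA, ?_⟩
  rw [mem_ofPred_eq, infEDist_zero_of_mem hxA]
  exact infEDist_pos_iff_notMem_closure.2 hfar

end Cells

section SelectionPrinciple

variable {X : Type*} [TopologicalSpace X]

def IsDisjointRefinement (𝓑 𝓐 : Set (Set X)) : Prop :=
  (∀ V ∈ 𝓑, IsOpen V) ∧ 𝓑.Pairwise Disjoint ∧ ∀ V ∈ 𝓑, ∃ U ∈ 𝓐, V ⊆ U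

lemma isDisjointRefinement_biUnion_image_inter {𝓑 𝓐 : Set (Set X)} {F : Set X → Set (Set X)}
    (h𝓑o : ∀ V ∈ 𝓑, IsOpen V) (h𝓑 : 𝓑.Pairwise Disjoint)
    (hF : ∀ V ∈ 𝓑, IsDisjointRefinement (F V) 𝓐) :
    IsDisjointRefinement (⋃ V ∈ 𝓑, (V ∩ ·) '' F V) 𝓐 := by
  have hmem : ∀ S ∈ ⋃ V ∈ 𝓑, (V ∩ ·) '' F V, ∃ V ∈ 𝓑, ∃ W ∈ F V, V ∩ W = S := by
    simp only [mem_iUnion, mem_image, exists_prop]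
    exact fun _ h => h
  refine ⟨fun S hS => ?_, fun S₁ hS₁ S₂ hS₂ hne => ?_, fun S hS => ?_⟩
  · obtain ⟨V, hV, W, hW, rfl⟩ := hmem S hS
    exact (h𝓑o V hV).inter ((hF V hV).1 W hW)
  · obtain ⟨V₁, hV₁, W₁, hW₁, rfl⟩ := hmem S₁ hS₁
    obtain ⟨V₂, hV₂, W₂, hW₂, rfl⟩ := hmem S₂ hS₂
    by_cases hV : V₁ = V₂
    · subst hV
      exact ((hF V₁ hV₁).2.1 hW₁ hW₂ fun h => hne (h ▸ rfl)).mono inter_subset_right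
        inter_subset_right
    · exact (h𝓑 hV₁ hV₂ hV).mono inter_subset_left inter_subset_left
  · obtain ⟨V, hV, W, hW, rfl⟩ := hmem S hS
    obtain ⟨U, hU, hWU⟩ := (hF V hV).2.2 W hW
    exact ⟨U, hU, inter_subset_right.trans hWU⟩

lemma ScSel.mono {𝓐 𝓑 : Set (Set (Set X))} (h𝓑𝓐 : 𝓑 ⊆ 𝓐) (h : ScSel X 𝓐) : ScSel X 𝓑 :=
  fun A hA => h A fun n => h𝓑𝓐 (hA n)

lemma IsTCover.isOpenCover {𝓣 𝓤 : Set (Set X)} (h : IsTCover 𝓣 𝓤) : IsOpenCover 𝓤 :=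
  ⟨h.1, h.2.1⟩

end SelectionPrinciple

section Separable

variable {X : Type*} [PseudoEMetricSpace X] [SecondCountableTopology X]

theorem CovDimLE.exists_isDisjointRefinement {T : Set X} {d : ℕ} (hT : CovDimLE T d)
    {H : ℕ → Set (Set X)} (hH : ∀ c, IsOpenCover (H c)) :
    ∃ G : ℕ → Set (Set X), (∀ c, IsDisjointRefinement (G c) (H c)) ∧ T ⊆ ⋃ c, ⋃₀ G c := by
  let 𝓖 : Set (Set X) := {U | IsOpen U ∧ ∀ c ≤ d, ∃ V ∈ H c, U ⊆ V}
  have h𝓖 : ∀ x, ∃ U ∈ 𝓖, x ∈ U := by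
    intro x
    choose V hV hxV using fun c => (hH c).2 x
    exact ⟨⋂ c ∈ Iic d, V c, ⟨(finite_Iic d).isOpen_biInter fun c _ => (hH c).1 _ (hV c),
      fun c hc => ⟨V c, hV c, biInter_subset_of_mem hc⟩⟩, mem_iInter₂.2 fun c _ => hxV c⟩
  obtain ⟨𝓖₀, h𝓖₀c, h𝓖₀𝓖, h𝓖₀U⟩ := TopologicalSpace.isOpen_sUnion_countable 𝓖 fun U hU => hU.1
  obtain ⟨O, hO⟩ := (h𝓖₀c.insert ∅).exists_eq_range (insert_nonempty _ _)
  have hO𝓖 : ∀ i, O i = ∅ ∨ O i ∈ 𝓖 := fun i =>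
    (show O i ∈ insert ∅ 𝓖₀ from hO ▸ mem_range_self i).imp id fun h => h𝓖₀𝓖 h
  have hOo : ∀ i, IsOpen (O i) := fun i => (hO𝓖 i).elim (fun h => h ▸ isOpen_empty) (·.1)
  have hTO : T ⊆ ⋃ i, O i := by
    intro x _
    obtain ⟨U, hU, hxU⟩ := h𝓖 x
    obtain ⟨S, hS, hxS⟩ := mem_sUnion.1 (show x ∈ ⋃₀ 𝓖₀ from h𝓖₀U ▸ mem_sUnion_of_mem hxU hU)
    obtain ⟨i, rfl⟩ : S ∈ range O := hO ▸ mem_insert_of_mem _ hS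
    exact mem_iUnion_of_mem i hxS
  obtain ⟨A, hAO, hA⟩ := hT.exists_refinement hOo hTO
  refine ⟨fun c => {V ∈ cell O A '' {σ | σ.card = c + 1} | ∃ U ∈ H c, V ⊆ U},
    fun c => ⟨?_, (pairwise_disjoint_image_cell _).mono fun _ hV => hV.1, fun _ hV => hV.2⟩,
    fun x hx => ?_⟩
  · rintro _ ⟨⟨σ, -, rfl⟩, -⟩
    exact isOpen_cell hOo σ
  obtain ⟨hne, hord, hloc⟩ := hA x hx
  obtain ⟨σ, ⟨i, hi⟩, hσ, hxσ⟩ := exists_mem_cell hAO hne hord hloc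
  obtain ⟨-, hOH⟩ := (hO𝓖 i).resolve_left (Set.Nonempty.ne_empty ⟨x, cell_subset hi hxσ⟩)
  obtain ⟨U, hU, hOU⟩ := hOH (σ.card - 1) (by omega)
  have hcard : σ.card - 1 + 1 = σ.card := Nat.sub_add_cancel (Finset.card_pos.2 ⟨i, hi⟩)
  exact mem_iUnion.2 ⟨σ.card - 1, cell O A σ,
    ⟨⟨σ, hcard.symm, rfl⟩, U, hU, (cell_subset hi).trans hOU⟩, hxσ⟩

theorem ScSel.of_fdSets (h : ScSel X {𝓤 | IsTCover (fdSets X) 𝓤}) : ScSel X {𝓤 | IsOpenCover 𝓤} := by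
  intro A hA
  let W : ℕ → Set (Set X) := fun n => {U | ∃ F : ℕ → Set (Set X),
    (∀ j, IsDisjointRefinement (F j) (A (Nat.pair n j))) ∧ U = ⋃ j, ⋃₀ F j}
  have hW : ∀ n, IsTCover (fdSets X) (W n) := by
    intro n
    refine ⟨?_, fun x => ?_, fun T ⟨d, hT⟩ => ?_⟩
    · rintro _ ⟨F, hF, rfl⟩
      exact isOpen_iUnion fun j => isOpen_sUnion (hF j).1
    · obtain ⟨U, hU, hxU⟩ := (hA (Nat.pair n 0)).2 x
      refine ⟨U, ⟨fun j => {V | V = U ∧ j = 0}, fun j => ⟨?_, ?_, ?_⟩, ?_⟩, hxU⟩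
      · rintro V ⟨rfl, rfl⟩
        exact (hA _).1 _ hU
      · rintro V ⟨rfl, -⟩ W ⟨rfl, -⟩ hne
        exact absurd rfl hne
      · rintro V ⟨rfl, rfl⟩
        exact ⟨V, hU, subset_rfl⟩
      · ext y
        simp
    · obtain ⟨G, hG, hTG⟩ := hT.exists_isDisjointRefinement fun j => hA (Nat.pair n j)
      exact ⟨_, ⟨G, hG, rfl⟩, hTG⟩
  obtain ⟨B, hB, hBcov⟩ := h W hW
  have hF : ∀ n, ∀ V ∈ B n, ∃ F : ℕ → Set (Set X),
      (∀ j, IsDisjointRefinement (F j) (A (Nat.pair n j))) ∧ V ⊆ ⋃ j, ⋃₀ F j := by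
    intro n V hV
    obtain ⟨_, ⟨F, hF, rfl⟩, hVF⟩ := (hB n).2.2 V hV
    exact ⟨F, hF, hVF⟩
  choose! F hF hVF using hF
  refine ⟨fun k => ⋃ V ∈ B k.unpair.1, (V ∩ ·) '' F k.unpair.1 V k.unpair.2, fun k => ?_,
    fun x => ?_⟩
  · refine isDisjointRefinement_biUnion_image_inter (hB _).1 (hB _).2.1 fun V hV => ?_
    simpa only [Nat.pair_unpair] using hF _ V hV k.unpair.2
  obtain ⟨n, V, hV, hxV⟩ := hBcov x
  obtain ⟨j, hj⟩ := mem_iUnion.1 (hVF n V hV hxV)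
  obtain ⟨V', hV', hxV'⟩ := mem_sUnion.1 hj
  refine ⟨Nat.pair n j, V ∩ V', ?_, hxV, hxV'⟩
  simp only [Nat.unpair_pair]
  exact mem_biUnion hV (mem_image_of_mem _ hV')

end Separable

end

theorem statement_15 {X : Type*} [MetricSpace X] [TopologicalSpace.SeparableSpace X] :
    (ScSel X {𝓤 : Set (Set X) | IsOpenCover 𝓤} ↔
      ScSel X {𝓤 : Set (Set X) | IsTCover (kfdSets X) 𝓤}) ∧
    (ScSel X {𝓤 : Set (Set X) | IsOpenCover 𝓤} ↔
      ScSel X {𝓤 : Set (Set X) | IsTCover (fdSets X) 𝓤}) := by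
  have : SecondCountableTopology X := UniformSpace.secondCountable_of_separable X
  have hfd_kfd : {𝓤 : Set (Set X) | IsTCover (fdSets X) 𝓤} ⊆ {𝓤 | IsTCover (kfdSets X) 𝓤} :=
    fun _ h => ⟨h.1, h.2.1, fun T hT => h.2.2 T hT.2⟩
  exact ⟨⟨ScSel.mono fun _ => IsTCover.isOpenCover, fun h => (h.mono hfd_kfd).of_fdSets⟩,
    ⟨ScSel.mono fun _ => IsTCover.isOpenCover, ScSel.of_fdSets⟩⟩
end

section
/- Let X be a compact metrizable space such that dim_G(X) is defined (TWO has a winning strategy in G_c^α(𝓞,𝓞) on X for some ordinal α), and let 𝓒 denote the Cantor set. Then dim_G(X × 𝓒) = dim_G(X). -/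
open Set Topology

/-! If `Y` is a nonempty profinite space, a strategy for TWO on `X` is turned into one on
`X × Y` by answering each cover `𝓤` of `X × Y` with tubes: for every `x` the tube lemma and the
disjoint clopen refinements of covers of `Y` give an open `V ∋ x` and a finite clopen partition
`𝓚` of `Y` with every `V ×ˢ K` inside a member of `𝓤`. TWO plays the strategy on the cover of
`X` formed by such `V` and splits each of its answers `V` into the tubes `V ×ˢ K`, which are
still pairwise disjoint. Conversely, `X` is a retract of `X × Y`, and winning strategies pass to
retracts by pulling covers back along the retraction and answers along the section. -/

def IsDisjointOpenRefinement {X : Type*} [TopologicalSpace X] (T 𝓞 : Set (Set X)) : Prop :=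
  (∀ V ∈ T, IsOpen V) ∧ T.Pairwise Disjoint ∧ ∀ V ∈ T, ∃ U ∈ 𝓞, V ⊆ U

namespace TwoWinsC

variable {S Z : Type*} [TopologicalSpace S] [TopologicalSpace Z] {α : Ordinal.{0}}

/-- A winning strategy on `S` is simulated on `Z` by translating ONE's covers with `Φ`, TWO's
answers with `Ψ`, and following the point `z` through `f z`. -/
theorem transfer (Φ : Set (Set Z) → Set (Set S)) (Ψ : Set (Set Z) → Set (Set S) → Set (Set Z))
    (f : Z → S) (hΦ : ∀ 𝓤, IsOpenCover 𝓤 → IsOpenCover (Φ 𝓤))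
    (hΨ : ∀ 𝓤 T, IsOpenCover 𝓤 → IsDisjointOpenRefinement T (Φ 𝓤) →
      IsDisjointOpenRefinement (Ψ 𝓤 T) 𝓤)
    (hf : ∀ 𝓤 T, IsOpenCover 𝓤 → IsDisjointOpenRefinement T (Φ 𝓤) →
      ∀ z, ∀ V ∈ T, f z ∈ V → ∃ W ∈ Ψ 𝓤 T, z ∈ W)
    (h : TwoWinsC S α) : TwoWinsC Z α := by
  obtain ⟨F, hlegal, hwin⟩ := h
  refine ⟨fun γ hγ O => Ψ (O γ le_rfl) (F γ hγ fun β hβ => Φ (O β hβ)), ?_, ?_⟩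
  · exact fun γ hγ O hO =>
      hΨ _ _ (hO γ le_rfl) (hlegal γ hγ _ fun β hβ => hΦ _ (hO β hβ))
  · intro O hO z
    obtain ⟨γ, hγ, V, hV, hzV⟩ := hwin (fun γ hγ => Φ (O γ hγ)) (fun γ hγ => hΦ _ (hO γ hγ)) (f z)
    have hlegalγ := hlegal γ hγ (fun β hβ => Φ (O β (lt_of_le_of_lt hβ hγ)))
      fun β hβ => hΦ _ (hO β _)
    exact ⟨γ, hγ, hf _ _ (hO γ hγ) hlegalγ z V hV hzV⟩

theorem of_retract (s : C(S, Z)) (p : C(Z, S)) (hps : Function.LeftInverse p s)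
    (h : TwoWinsC Z α) : TwoWinsC S α := by
  refine transfer (Set.image (p ⁻¹' ·)) (fun _ T => (s ⁻¹' ·) '' T) s ?_ ?_ ?_ h
  · rintro 𝓤 ⟨hopen, hcover⟩
    refine ⟨?_, fun z => ?_⟩
    · rintro _ ⟨U, hU, rfl⟩
      exact (hopen U hU).preimage p.continuous
    · obtain ⟨U, hU, hzU⟩ := hcover (p z)
      exact ⟨_, ⟨U, hU, rfl⟩, hzU⟩
  · rintro 𝓤 T - ⟨hopen, hdisj, hrefine⟩
    refine ⟨?_, ?_, ?_⟩
    · rintro _ ⟨V, hV, rfl⟩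
      exact (hopen V hV).preimage s.continuous
    · rintro _ ⟨V, hV, rfl⟩ _ ⟨V', hV', rfl⟩ hne
      exact (hdisj hV hV' fun h => hne (h ▸ rfl)).preimage s
    · rintro _ ⟨V, hV, rfl⟩
      obtain ⟨_, ⟨U, hU, rfl⟩, hVU⟩ := hrefine V hV
      refine ⟨U, hU, fun x hx => ?_⟩
      simpa only [Set.mem_preimage, hps x] using hVU hx
  · exact fun _ T _ _ x V hV hx => ⟨_, ⟨V, hV, rfl⟩, hx⟩

end TwoWinsC

section Tubes

variable {X Y : Type*} [TopologicalSpace Y]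

def IsTubePartition (𝓤 : Set (Set (X × Y))) (V : Set X) (𝓚 : Set (Set Y)) : Prop :=
  (∀ K ∈ 𝓚, IsOpen K ∧ ∃ U ∈ 𝓤, V ×ˢ K ⊆ U) ∧ 𝓚.Pairwise Disjoint ∧ ∀ y, ∃ K ∈ 𝓚, y ∈ K

theorem IsTubePartition.mono {𝓤 : Set (Set (X × Y))} {V V' : Set X} {𝓚 : Set (Set Y)}
    (h : IsTubePartition 𝓤 V 𝓚) (hV : V' ⊆ V) : IsTubePartition 𝓤 V' 𝓚 := by
  obtain ⟨hgood, hdisj, hcover⟩ := h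
  refine ⟨fun K hK => ?_, hdisj, hcover⟩
  obtain ⟨hKopen, U, hU, hVU⟩ := hgood K hK
  exact ⟨hKopen, U, hU, (Set.prod_mono hV subset_rfl).trans hVU⟩

/-- TWO's answer on `X × Y` to the cover `𝓤`, given the answer `T` on `X` to `tubeCover 𝓤`. -/
def tubeSplitting (𝓤 : Set (Set (X × Y))) (T : Set (Set X)) : Set (Set (X × Y)) :=
  {W | ∃ V ∈ T, ∃ K ∈ Classical.epsilon (IsTubePartition 𝓤 V), W = V ×ˢ K}

variable [TopologicalSpace X]

theorem exists_isTubePartition [CompactSpace Y] [T2Space Y] [TotallyDisconnectedSpace Y]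
    {𝓤 : Set (Set (X × Y))} (h𝓤 : IsOpenCover 𝓤) (x : X) :
    ∃ V, IsOpen V ∧ x ∈ V ∧ ∃ 𝓚, IsTubePartition 𝓤 V 𝓚 := by
  have hrect : ∀ y : Y, ∃ A B, IsOpen A ∧ IsOpen B ∧ x ∈ A ∧ y ∈ B ∧ ∃ U ∈ 𝓤, A ×ˢ B ⊆ U := by
    intro y
    obtain ⟨U, hU, hxy⟩ := h𝓤.2 (x, y)
    obtain ⟨A, B, hA, hB, hxA, hyB, hAB⟩ := isOpen_prod_iff.1 (h𝓤.1 U hU) x y hxy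
    exact ⟨A, B, hA, hB, hxA, hyB, U, hU, hAB⟩
  choose A B hA hB hxA hyB hAB using hrect
  have hBcover : TopologicalSpace.IsOpenCover fun y => (⟨B y, hB y⟩ : TopologicalSpace.Opens Y) :=
    .of_sets hB (Set.eq_univ_of_forall fun y => Set.mem_iUnion_of_mem y (hyB y))
  obtain ⟨n, W, hW, hWcover, hWdisj⟩ := hBcover.exists_finite_nonempty_disjoint_clopen_cover
  choose _ i hWi using hW
  refine ⟨⋂ j, A (i j), isOpen_iInter_of_finite fun j => hA _,
    Set.mem_iInter.2 fun j => hxA _, Set.range fun j => (W j : Set Y), ?_, ?_, ?_⟩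
  · rintro _ ⟨j, rfl⟩
    obtain ⟨U, hU, hABU⟩ := hAB (i j)
    exact ⟨(W j).isOpen, U, hU,
      (Set.prod_mono (Set.iInter_subset _ j) (hWi j)).trans hABU⟩
  · exact Pairwise.range_pairwise fun j j' hjj' =>
      TopologicalSpace.Clopens.coe_disjoint.2 (hWdisj hjj')
  · intro y
    obtain ⟨j, hj⟩ := Set.mem_iUnion.1 (hWcover (Set.mem_univ y))
    exact ⟨_, ⟨j, rfl⟩, hj⟩

def tubeCover (𝓤 : Set (Set (X × Y))) : Set (Set X) :=
  {V | IsOpen V ∧ ∃ 𝓚, IsTubePartition 𝓤 V 𝓚}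

theorem isOpenCover_tubeCover [CompactSpace Y] [T2Space Y] [TotallyDisconnectedSpace Y]
    {𝓤 : Set (Set (X × Y))} (h𝓤 : IsOpenCover 𝓤) : IsOpenCover (tubeCover 𝓤) := by
  refine ⟨fun V hV => hV.1, fun x => ?_⟩
  obtain ⟨V, hV, hxV, hpart⟩ := exists_isTubePartition h𝓤 x
  exact ⟨V, ⟨hV, hpart⟩, hxV⟩

theorem isTubePartition_epsilon {𝓤 : Set (Set (X × Y))} {T : Set (Set X)}
    (hT : IsDisjointOpenRefinement T (tubeCover 𝓤)) {V : Set X} (hV : V ∈ T) :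
    IsTubePartition 𝓤 V (Classical.epsilon (IsTubePartition 𝓤 V)) := by
  obtain ⟨V', ⟨-, 𝓚, h𝓚⟩, hVV'⟩ := hT.2.2 V hV
  exact Classical.epsilon_spec ⟨𝓚, h𝓚.mono hVV'⟩

theorem IsDisjointOpenRefinement.tubeSplitting {𝓤 : Set (Set (X × Y))} {T : Set (Set X)}
    (hT : IsDisjointOpenRefinement T (tubeCover 𝓤)) :
    IsDisjointOpenRefinement (tubeSplitting 𝓤 T) 𝓤 := by
  refine ⟨?_, ?_, ?_⟩
  · rintro _ ⟨V, hV, K, hK, rfl⟩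
    exact (hT.1 V hV).prod ((isTubePartition_epsilon hT hV).1 K hK).1
  · rintro _ ⟨V, hV, K, hK, rfl⟩ _ ⟨V', hV', K', hK', rfl⟩ hne
    refine Set.disjoint_prod.2 ?_
    by_cases hVV' : V = V'
    · subst hVV'
      exact Or.inr ((isTubePartition_epsilon hT hV).2.1 hK hK' fun h => hne (h ▸ rfl))
    · exact Or.inl (hT.2.1 hV hV' hVV')
  · rintro _ ⟨V, hV, K, hK, rfl⟩
    exact ((isTubePartition_epsilon hT hV).1 K hK).2

theorem TwoWinsC.prod [CompactSpace Y] [T2Space Y] [TotallyDisconnectedSpace Y]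
    {α : Ordinal.{0}} (h : TwoWinsC X α) : TwoWinsC (X × Y) α := by
  refine TwoWinsC.transfer tubeCover tubeSplitting Prod.fst (fun _ => isOpenCover_tubeCover)
    (fun _ _ _ hT => hT.tubeSplitting) ?_ h
  intro 𝓤 T _ hT z V hV hzV
  obtain ⟨K, hK, hzK⟩ := (isTubePartition_epsilon hT hV).2.2 z.2
  exact ⟨V ×ˢ K, ⟨V, hV, K, hK, rfl⟩, hzV, hzK⟩

end Tubes

theorem twoWinsC_prod_iff {X Y : Type*} [TopologicalSpace X] [TopologicalSpace Y]
    [CompactSpace Y] [T2Space Y] [TotallyDisconnectedSpace Y] [Nonempty Y] {α : Ordinal.{0}} :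
    TwoWinsC (X × Y) α ↔ TwoWinsC X α := by
  obtain ⟨y⟩ := ‹Nonempty Y›
  exact ⟨TwoWinsC.of_retract ⟨fun x => (x, y), by fun_prop⟩ ⟨Prod.fst, continuous_fst⟩
    fun _ => rfl, TwoWinsC.prod⟩

theorem tpcEq_congr {X Z : Type*} [TopologicalSpace X] [TopologicalSpace Z]
    (h : ∀ β, TwoWinsC X β ↔ TwoWinsC Z β) (α : Ordinal.{0}) : TPCEq X α ↔ TPCEq Z α :=
  and_congr (h α) (forall₂_congr fun β _ => not_congr (h β))

theorem statement_19_general {X : Type*} [MetricSpace X] :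
    ∀ d : Ordinal.{0}, TPCEq X (1 + d) ↔ TPCEq (X × (ℕ → Bool)) (1 + d) :=
  fun d => tpcEq_congr (fun _ => twoWinsC_prod_iff.symm) (1 + d)

theorem statement_19 {X : Type*} [MetricSpace X] [CompactSpace X]
    (hdef : ∃ α : Ordinal.{0}, TwoWinsC X α) :
    ∀ d : Ordinal.{0}, TPCEq X (1 + d) ↔ TPCEq (X × (ℕ → Bool)) (1 + d) :=
  statement_19_general
end
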